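/- Let k ≥ 2 and let x and y be binary strings of the same length satisfying B^(k−1)(x) = B^(k−1)(y), B_L^(k−1)(x) = B_L^(k−1)(y), B_R^(k−1)(x) = B_R^(k−1)(y), and B_LR^(k−1)(x) = B_LR^(k−1)(y). Then B^(k)((x, 0, 0, y, 0)) = B^(k)((y, 0, 0, x, 0)), where (x, 0, 0, y, 0) denotes the concatenation of x, two 0 bits, y, and a trailing 0 bit. -/

import Mathlib

/-- The multiset of all `s`-gapped subsequences of a binary string (all lengths,
including the empty subsequence), counted with multiplicity over index choices:
consecutive chosen indices must differ by at least `s`. -/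
def gappedSubseqs (s : ℕ) : List Bool → Multiset (List Bool)
  | [] => {[]}
  | a :: l => gappedSubseqs s l + (gappedSubseqs s (l.drop (s - 1))).map (a :: ·)
termination_by x => x.length
decreasing_by
  · simp
  · simp only [List.length_drop, List.length_cons]; omega

/-- The `s`-gapped `k`-deck: all `s`-gapped subsequences of length between 1 and `k`. -/
def gDeck (s k : ℕ) (x : List Bool) : Multiset (List Bool) :=
  (gappedSubseqs s x).filter (fun w => 1 ≤ w.length ∧ w.length ≤ k)

/-- The exact `s`-gapped `k`-deck: all `s`-gapped subsequences of length exactly `k`. -/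
def dDeck (s k : ℕ) (x : List Bool) : Multiset (List Bool) :=
  (gappedSubseqs s x).filter (fun w => w.length = k)

/-- The classical (ungapped) `k`-deck: the multiset of all length-`k` subsequences. -/
def deck (k : ℕ) (x : List Bool) : Multiset (List Bool) :=
  (gappedSubseqs 1 x).filter (fun w => w.length = k)

/-- The gapped `k`-deck `B^(k)` (gap `2`). -/
def Bdeck (k : ℕ) (x : List Bool) : Multiset (List Bool) := gDeck 2 k x

/-- `B_L^(k)`: the gapped `k`-deck of the string punctured on the left. -/
def BLdeck (k : ℕ) (x : List Bool) : Multiset (List Bool) := Bdeck k x.tail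

/-- `B_R^(k)`: the gapped `k`-deck of the string punctured on the right. -/
def BRdeck (k : ℕ) (x : List Bool) : Multiset (List Bool) := Bdeck k x.dropLast

/-- `B_LR^(k)`: the gapped `k`-deck of the string punctured on both ends. -/
def BLRdeck (k : ℕ) (x : List Bool) : Multiset (List Bool) := Bdeck k x.tail.dropLast

/-- `S(k)`: the smallest positive `n` such that two distinct binary strings of
length `n` share the same `k`-deck. -/
noncomputable def Sval (k : ℕ) : ℕ :=
  sInf {n | 0 < n ∧ ∃ x y : List Bool, x.length = n ∧ y.length = n ∧ x ≠ y ∧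
    deck k x = deck k y}

/-- `G(k)`: the smallest positive `n` such that two distinct binary strings of
length `n` share the same gapped `k`-deck. -/
noncomputable def Gval (k : ℕ) : ℕ :=
  sInf {n | 0 < n ∧ ∃ x y : List Bool, x.length = n ∧ y.length = n ∧ x ≠ y ∧
    Bdeck k x = Bdeck k y}

/-- `G_s(k)`: the smallest positive `n` such that two distinct binary strings of
length `n` share the same `s`-gapped `k`-deck. -/
noncomputable def Gs (s k : ℕ) : ℕ :=
  sInf {n | 0 < n ∧ ∃ x y : List Bool, x.length = n ∧ y.length = n ∧ x ≠ y ∧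
    gDeck s k x = gDeck s k y}

/-- `G*(k)`: the smallest positive `n` such that two distinct binary strings of
length `n` share the same gapped `k`-deck, also after puncturing on the left,
right and both sides. -/
noncomputable def Gstar (k : ℕ) : ℕ :=
  sInf {n | 0 < n ∧ ∃ x y : List Bool, x.length = n ∧ y.length = n ∧ x ≠ y ∧
    Bdeck k x = Bdeck k y ∧ BLdeck k x = BLdeck k y ∧
    BRdeck k x = BRdeck k y ∧ BLRdeck k x = BLRdeck k y}

mutual
/-- Morse-Thue string `x^(k+1)` (index shifted: `mtX 0 = x^(1) = (0,1)`). -/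
def mtX : ℕ → List Bool
  | 0 => [false, true]
  | k + 1 => mtX k ++ mtY k
/-- Morse-Thue string `y^(k+1)` (index shifted: `mtY 0 = y^(1) = (1,0)`). -/
def mtY : ℕ → List Bool
  | 0 => [true, false]
  | k + 1 => mtY k ++ mtX k
end

mutual
/-- Padded Morse-Thue string `x^(k+1)` (index shifted: `px 0 = x^(1) = (0,0,1,0)`). -/
def px : ℕ → List Bool
  | 0 => [false, false, true, false]
  | k + 1 => [false] ++ px k ++ [false, false] ++ py k ++ [false]
/-- Padded Morse-Thue string `y^(k+1)` (index shifted: `py 0 = y^(1) = (0,1,0,0)`). -/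
def py : ℕ → List Bool
  | 0 => [false, true, false, false]
  | k + 1 => [false] ++ py k ++ [false, false] ++ px k ++ [false]
end

/-- Interleaving `(z₁,x₁,z₂,x₂,…,z_{k-1},x_{k-1},z_k)` of `z` and `x`
(used with `|z| = |x| + 1`). -/
def interleave : List Bool → List Bool → List Bool
  | z, [] => z
  | [], _ :: _ => []
  | a :: l, b :: m => a :: b :: interleave l m

/-- `N(w, p)`: the number of occurrences of the wildcard string `w`
(entries `none` are wildcards `J`, `some b` is a letter of `Γ = {X, Y}`)
as a subsequence of `p`, each wildcard matching either letter. -/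
def Nw : List (Option Bool) → List Bool → ℕ
  | [], _ => 1
  | _ :: _, [] => 0
  | a :: w, b :: p =>
      Nw (a :: w) p + if a = none ∨ a = some b then Nw w p else 0

/-- `U_r(k)`: wildcard strings of length between `r` and `k` with exactly `r`
non-wildcard symbols. -/
def Ur (r k : ℕ) : Set (List (Option Bool)) :=
  {w | r ≤ w.length ∧ w.length ≤ k ∧ w.countP (fun a => a.isSome) = r}

/-- `U(k₁, k₂) = U₁(k₁) ∪ U₂(k₂)`. -/
def Uset (k1 k2 : ℕ) : Set (List (Option Bool)) := Ur 1 k1 ∪ Ur 2 k2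

/-- `p ∼^{U(k₁,k₂)} q`: `N(w,p) = N(w,q)` for all `w ∈ U(k₁,k₂)`. -/
def equivU (k1 k2 : ℕ) (p q : List Bool) : Prop :=
  ∀ w ∈ Uset k1 k2, Nw w p = Nw w q

/-- `S_U(k₁,k₂)`: the smallest `m` for which two distinct strings
`p, q ∈ Γ^m` satisfy `p ∼^{U(k₁,k₂)} q`. -/
noncomputable def SU (k1 k2 : ℕ) : ℕ :=
  sInf {m | ∃ p q : List Bool, p.length = m ∧ q.length = m ∧ p ≠ q ∧
    equivU k1 k2 p q}

/-- `h_{x,y}(p)`: replace each letter of `p` (`false = X`, `true = Y`) by `x`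
resp. `y` padded with one `0` at each end. -/
def hxy (x y : List Bool) (p : List Bool) : List Bool :=
  (p.map (fun b => [false] ++ (if b then y else x) ++ [false])).flatten

abbrev g2 (l : List Bool) : Multiset (List Bool) := gappedSubseqs 2 l
abbrev Dne (l : List Bool) : Multiset (List Bool) := (g2 l).filter (fun w => ¬ w = [])
abbrev Fk (k : ℕ) (M : Multiset (List Bool)) : Multiset (List Bool) :=
  M.filter (fun w => 1 ≤ w.length ∧ w.length ≤ k)

lemma g_nil : g2 [] = {[]} := by rw [g2, gappedSubseqs.eq_def]

lemma g_cons (a : Bool) (l : List Bool) :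
    g2 (a :: l) = g2 l + (g2 l.tail).map (a :: ·) := by
  rw [g2, gappedSubseqs]
  norm_num [List.drop_one]

lemma g_eq : ∀ l : List Bool, g2 l = [] ::ₘ Dne l := by
  intro l
  induction l with
  | nil => simp [Dne, g_nil, Multiset.filter_singleton]
  | cons a l ih =>
      have h1 : Multiset.filter (fun w => ¬ w = []) ((g2 l.tail).map (a :: ·)) =
          (g2 l.tail).map (a :: ·) := by
        rw [Multiset.filter_eq_self]
        intro w hw
        rw [Multiset.mem_map] at hw
        obtain ⟨b, _, rfl⟩ := hw
        simp
      have h2 : Dne (a :: l) = Dne l + (g2 l.tail).map (a :: ·) := by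
        show Multiset.filter _ (g2 (a :: l)) = _
        rw [g_cons, Multiset.filter_add, h1]
      rw [g_cons, ih, h2, Multiset.cons_add]

lemma filter_bind (p : List Bool → Prop) [DecidablePred p]
    (s : Multiset (List Bool)) (h : List Bool → Multiset (List Bool)) :
    Multiset.filter p (s.bind h) = s.bind (fun a => Multiset.filter p (h a)) := by
  induction s using Multiset.induction_on with
  | empty => simp
  | cons a s ih => simp [Multiset.cons_bind, Multiset.filter_add, ih]

lemma D_to_B (m : ℕ) (z : List Bool) :
    (Dne z).filter (fun w => w.length ≤ m) = Bdeck m z := by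
  rw [Dne, Multiset.filter_filter, Bdeck, gDeck]
  apply Multiset.filter_congr
  intro w _
  constructor
  · rintro ⟨h1, h2⟩
    exact ⟨by cases w <;> simp_all, h1⟩
  · rintro ⟨h1, h2⟩
    exact ⟨h2, by cases w <;> simp_all⟩

lemma F_D (k : ℕ) (z : List Bool) : Fk k (Dne z) = Bdeck k z := by
  rw [Fk, Dne, Multiset.filter_filter, Bdeck, gDeck]
  apply Multiset.filter_congr
  intro w _
  cases w <;> simp

lemma B_mono {m m' : ℕ} (h : m ≤ m') (z : List Bool) :
    Bdeck m z = (Bdeck m' z).filter (fun w => w.length ≤ m) := by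
  rw [Bdeck, Bdeck, gDeck, gDeck, Multiset.filter_filter]
  apply Multiset.filter_congr
  intro w _
  constructor
  · rintro ⟨h1, h2⟩; exact ⟨h2, h1, le_trans h2 h⟩
  · rintro ⟨h1, h2, h3⟩; exact ⟨h2, h1⟩

lemma F_map (f : List Bool → List Bool) (c k : ℕ)
    (hf : ∀ b, (f b).length = b.length + c) (z : List Bool) :
    Fk k ((Dne z).map f) = (Bdeck (k - c) z).map f := by
  rw [Fk, Multiset.filter_map]
  rw [show ((Dne z).filter ((fun w => 1 ≤ w.length ∧ w.length ≤ k) ∘ f)) =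
      (Dne z).filter (fun w => w.length ≤ k - c) from ?_, D_to_B]
  simp only [Dne]
  rw [Multiset.filter_filter, Multiset.filter_filter]
  apply Multiset.filter_congr
  intro w _
  have hw := hf w
  have hlen : w = [] ↔ w.length = 0 := by cases w <;> simp
  constructor
  · rintro ⟨⟨h1, h2⟩, h3⟩
    rw [hw] at h1 h2
    exact ⟨by omega, h3⟩
  · rintro ⟨h1, h2⟩
    rw [hlen] at h2
    refine ⟨⟨?_, ?_⟩, fun hww => h2 (by rw [hww]; rfl)⟩ <;> rw [hw] <;> omega

lemma F_bind (f : List Bool → List Bool → List Bool) (c k : ℕ)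
    (hf : ∀ a b, (f a b).length = a.length + b.length + c) (z₁ z₂ : List Bool) :
    Fk k ((Dne z₁).bind fun a => (Dne z₂).map (f a)) =
      Fk k ((Bdeck (k - c - 1) z₁).bind fun a => (Bdeck (k - c - 1) z₂).map (f a)) := by
  have hlen : ∀ w : List Bool, w = [] ↔ w.length = 0 := by intro w; cases w <;> simp
  have hsplit : Dne z₁ = (Dne z₁).filter (fun w => w.length ≤ k - c - 1) +
      (Dne z₁).filter (fun w => ¬ w.length ≤ k - c - 1) :=
    (Multiset.filter_add_not _ _).symm
  simp only [Fk]
  rw [hsplit, Multiset.add_bind, Multiset.filter_add]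
  have hzero : Fk k (((Dne z₁).filter (fun w => ¬ w.length ≤ k - c - 1)).bind
      fun a => (Dne z₂).map (f a)) = 0 := by
    simp only [Fk]
    rw [filter_bind]
    rw [Multiset.bind_congr (g := fun _ => 0), Multiset.bind_zero]
    intro a ha
    rw [Multiset.mem_filter] at ha
    obtain ⟨ha1, ha2⟩ := ha
    simp only [Dne, Multiset.mem_filter] at ha1
    have ha3 : ¬ a = [] := ha1.2
    rw [Multiset.filter_map]
    rw [Multiset.filter_eq_nil.2, Multiset.map_zero]
    intro b hb
    simp only [Dne, Multiset.mem_filter] at hb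
    have hb1 : ¬ b = [] := hb.2
    rw [hlen] at ha3 hb1
    simp only [Function.comp]
    rw [hf]
    omega
  have hzero' := hzero
  simp only [Fk] at hzero'
  rw [hzero', add_zero, D_to_B]
  rw [filter_bind, filter_bind]
  apply Multiset.bind_congr
  intro a ha
  rw [Bdeck, gDeck, Multiset.mem_filter] at ha
  obtain ⟨-, ha1, ha2⟩ := ha
  rw [Multiset.filter_map, Multiset.filter_map]
  congr 1
  rw [Bdeck, gDeck]
  simp only [Dne]
  rw [Multiset.filter_filter, Multiset.filter_filter]
  apply Multiset.filter_congr
  intro b _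
  simp only [Function.comp]
  rw [hf]
  constructor
  · rintro ⟨⟨h1, h2⟩, h3⟩
    rw [hlen] at h3
    exact ⟨by omega, by omega, by omega⟩
  · rintro ⟨⟨h1, h2⟩, h3⟩
    rw [hlen]
    exact ⟨⟨by omega, by omega⟩, by omega⟩

lemma tail_append_of_ne_nil (y l : List Bool) (hy : y ≠ []) :
    (y ++ l).tail = y.tail ++ l := by
  cases y with
  | nil => exact absurd rfl hy
  | cons a t => simp

theorem g_split : ∀ (u : List Bool) (c : Bool) (v : List Bool),
    g2 (u ++ c :: v) =
      ((g2 u).bind fun a => (g2 v).map fun b => a ++ b) +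
      ((g2 u.dropLast).bind fun a => (g2 v.tail).map fun b => a ++ (c :: b))
  | [], c, v => by
      simp only [List.nil_append, List.dropLast_nil, g_nil, Multiset.singleton_bind]
      rw [g_cons]
      simp
  | [a], c, v => by
      show g2 (a :: c :: v) = _
      rw [g_cons, g_cons]
      simp only [List.tail_cons, List.dropLast_singleton, g_nil]
      rw [g_cons]
      simp only [g_nil, Multiset.singleton_bind, List.tail_nil]
      simp [Multiset.add_bind, Multiset.bind_map, add_comm, add_left_comm, add_assoc]
  | a :: a' :: u, c, v => by
      have ih1 := g_split (a' :: u) c v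
      have ih2 := g_split u c v
      show g2 (a :: ((a' :: u) ++ c :: v)) = _
      rw [g_cons]
      simp only [List.cons_append, List.tail_cons] at *
      rw [ih1, ih2]
      have hd : (a :: a' :: u).dropLast = a :: (a' :: u).dropLast := by
        simp [List.dropLast]
      rw [hd, g_cons (a := a), g_cons (a := a)]
      have ht : (a' :: u).dropLast.tail = u.dropLast := by
        rw [List.tail_dropLast]; simp
      rw [List.tail_cons, ht]
      simp only [Multiset.add_bind, Multiset.map_add, Multiset.map_bind, Multiset.bind_map,
        Multiset.map_map, Function.comp]
      simp only [List.cons_append]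
      abel


lemma Fk_add (k : ℕ) (s t : Multiset (List Bool)) : Fk k (s + t) = Fk k s + Fk k t :=
  Multiset.filter_add _ _ _

lemma Fk_cons (k : ℕ) (a : List Bool) (s : Multiset (List Bool)) :
    Fk k (a ::ₘ s) = (if 1 ≤ a.length ∧ a.length ≤ k then ({a} : Multiset (List Bool)) else 0)
      + Fk k s := by
  rw [Fk, Multiset.filter_cons]
  try split_ifs <;> simp_all [Fk]

lemma bind_singleton_id (s : Multiset (List Bool)) : (s.bind fun a => ({a} : Multiset (List Bool))) = s := by
  have := Multiset.bind_singleton (s := s) (fun a : List Bool => a)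
  simpa using this

lemma key (k : ℕ) (x y : List Bool) (hy : y ≠ []) :
    Bdeck k (x ++ [false, false] ++ y ++ [false]) =
      (if 1 ≤ ([] : List Bool).length ∧ ([] : List Bool).length ≤ k then ({[]} : Multiset (List Bool)) else 0) + Bdeck k x +
            (Bdeck k y +
              Fk k ((Bdeck (k - 0 - 1) x).bind fun a => Multiset.map (fun b => a ++ b) (Bdeck (k - 0 - 1) y))) +
          ((if 1 ≤ [false].length ∧ [false].length ≤ k then ({[false]} : Multiset (List Bool)) else 0) +
              Multiset.map (fun b => b ++ [false]) (Bdeck (k - 1) x) +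
            (Multiset.map (fun b => b ++ [false]) (Bdeck (k - 1) y.dropLast) +
              Fk k
                ((Bdeck (k - 1 - 1) x).bind fun a =>
                  Multiset.map (fun b => a ++ (b ++ [false])) (Bdeck (k - 1 - 1) y.dropLast)))) +
        ((if 1 ≤ [false].length ∧ [false].length ≤ k then ({[false]} : Multiset (List Bool)) else 0) +
              Multiset.map (fun b => b ++ [false]) (Bdeck (k - 1) x) +
            (Multiset.map (fun b => false :: b) (Bdeck (k - 1) y.tail) +
              Fk k
                ((Bdeck (k - 1 - 1) x).bind fun a =>
                  Multiset.map (fun b => a ++ false :: b) (Bdeck (k - 1 - 1) y.tail))) +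
          ((if 1 ≤ [false, false].length ∧ [false, false].length ≤ k then ({[false, false]} : Multiset (List Bool)) else 0) +
              Multiset.map (fun a => a ++ [false, false]) (Bdeck (k - 2) x) +
            (Multiset.map (fun b => false :: (b ++ [false])) (Bdeck (k - 2) y.tail.dropLast) +
              Fk k
                ((Bdeck (k - 2 - 1) x).bind fun a =>
                  Multiset.map (fun b => a ++ false :: (b ++ [false])) (Bdeck (k - 2 - 1) y.tail.dropLast))))) +
      ((if 1 ≤ [false].length ∧ [false].length ≤ k then ({[false]} : Multiset (List Bool)) else 0) +
            Multiset.map (fun b => b ++ [false]) (Bdeck (k - 1) x.dropLast) +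
          (Multiset.map (fun b => false :: b) (Bdeck (k - 1) y) +
            Fk k
              ((Bdeck (k - 1 - 1) x.dropLast).bind fun a =>
                Multiset.map (fun b => a ++ false :: b) (Bdeck (k - 1 - 1) y))) +
        ((if 1 ≤ [false, false].length ∧ [false, false].length ≤ k then ({[false, false]} : Multiset (List Bool)) else 0) +
            Multiset.map (fun a => a ++ [false, false]) (Bdeck (k - 2) x.dropLast) +
          (Multiset.map (fun b => false :: (b ++ [false])) (Bdeck (k - 2) y.dropLast) +
            Fk k
              ((Bdeck (k - 2 - 1) x.dropLast).bind fun a =>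
                Multiset.map (fun b => a ++ false :: (b ++ [false])) (Bdeck (k - 2 - 1) y.dropLast))))) := by
  have e0 : x ++ [false, false] ++ y ++ [false] = x ++ (false :: (false :: (y ++ [false]))) := by
    simp
  have ht : (y ++ [false]).tail = y.tail ++ [false] := tail_append_of_ne_nil y [false] hy
  have hd : (y ++ [false]).dropLast = y := by simp
  have htd : (y.tail ++ [false]).dropLast = y.tail := by simp
  have gy1 : g2 (y ++ [false]) = g2 y + (g2 y.dropLast).map (fun b => b ++ [false]) := by
    have h := g_split y false []
    simpa [g_nil, bind_singleton_id] using h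
  have gyt : g2 (y.tail ++ [false]) =
      g2 y.tail + (g2 y.tail.dropLast).map (fun b => b ++ [false]) := by
    have h := g_split y.tail false []
    simpa [g_nil, bind_singleton_id] using h
  have gmid : g2 (false :: (y ++ [false])) =
      g2 (y ++ [false]) + (g2 (y.tail ++ [false])).map (fun b => false :: b) := by
    rw [g_cons, ht]
  have main := g_split x false (false :: (y ++ [false]))
  rw [List.tail_cons, gmid, gy1, gyt] at main
  rw [g_eq x, g_eq x.dropLast, g_eq y, g_eq y.dropLast, g_eq y.tail, g_eq y.tail.dropLast] at main
  have hBW : Bdeck k (x ++ [false, false] ++ y ++ [false]) = Fk k (g2 (x ++ (false :: (false :: (y ++ [false]))))) := by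
    rw [e0]; rfl
  rw [hBW, main]
  simp only [Multiset.map_add, Multiset.map_cons, Multiset.map_map, Function.comp,
    Multiset.add_bind, Multiset.bind_add, Multiset.cons_bind, Multiset.bind_cons,
    Multiset.bind_map, List.nil_append, List.append_nil, Multiset.map_id']
  simp only [Fk_add, Fk_cons]
  rw [F_D, F_D]
  rw [F_map (fun b => b ++ [false]) 1 k (by intros; simp only [List.length_append, List.length_cons, List.length_nil]; try omega) x,
      F_map (fun b => b ++ [false]) 1 k (by intros; simp only [List.length_append, List.length_cons, List.length_nil]; try omega) x.dropLast,
      F_map (fun b => b ++ [false]) 1 k (by intros; simp only [List.length_append, List.length_cons, List.length_nil]; try omega) y.dropLast,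
      F_map (fun b => false :: b) 1 k (by intros; simp only [List.length_append, List.length_cons, List.length_nil]; try omega) y.tail,
      F_map (fun b => false :: b) 1 k (by intros; simp only [List.length_append, List.length_cons, List.length_nil]; try omega) y,
      F_map (fun a => a ++ [false, false]) 2 k (by intros; simp only [List.length_append, List.length_cons, List.length_nil]; try omega) x,
      F_map (fun a => a ++ [false, false]) 2 k (by intros; simp only [List.length_append, List.length_cons, List.length_nil]; try omega) x.dropLast,
      F_map (fun b => false :: (b ++ [false])) 2 k (by intros; simp only [List.length_append, List.length_cons, List.length_nil]; try omega) y.tail.dropLast,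
      F_map (fun b => false :: (b ++ [false])) 2 k (by intros; simp only [List.length_append, List.length_cons, List.length_nil]; try omega) y.dropLast]
  rw [F_bind (fun a b => a ++ b) 0 k (by intros; simp only [List.length_append, List.length_cons, List.length_nil]; try omega) x y,
      F_bind (fun a b => a ++ (b ++ [false])) 1 k (by intros; simp only [List.length_append, List.length_cons, List.length_nil]; try omega) x y.dropLast,
      F_bind (fun a b => a ++ false :: b) 1 k (by intros; simp only [List.length_append, List.length_cons, List.length_nil]; try omega) x y.tail,
      F_bind (fun a b => a ++ false :: (b ++ [false])) 2 k (by intros; simp only [List.length_append, List.length_cons, List.length_nil]; try omega) x y.tail.dropLast,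
      F_bind (fun a b => a ++ false :: b) 1 k (by intros; simp only [List.length_append, List.length_cons, List.length_nil]; try omega) x.dropLast y,
      F_bind (fun a b => a ++ false :: (b ++ [false])) 2 k (by intros; simp only [List.length_append, List.length_cons, List.length_nil]; try omega) x.dropLast y.dropLast]


/-- Under the inductive hypotheses at level `k-1`,
`B^(k)((x,0,0,y,0)) = B^(k)((y,0,0,x,0))`. -/
theorem stmt7 (k n : ℕ) (hk : 2 ≤ k) (x y : List Bool)
    (hx : x.length = n) (hy : y.length = n)
    (hB : Bdeck (k - 1) x = Bdeck (k - 1) y)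
    (hL : BLdeck (k - 1) x = BLdeck (k - 1) y)
    (hR : BRdeck (k - 1) x = BRdeck (k - 1) y)
    (hLR : BLRdeck (k - 1) x = BLRdeck (k - 1) y) :
    Bdeck k (x ++ [false, false] ++ y ++ [false]) =
      Bdeck k (y ++ [false, false] ++ x ++ [false]) := by
  rcases Nat.eq_zero_or_pos n with hn | hn
  · subst hn
    have hx0 : x = [] := List.length_eq_zero_iff.mp hx
    have hy0 : y = [] := List.length_eq_zero_iff.mp hy
    rw [hx0, hy0]
  · have hxn : x ≠ [] := by intro h; rw [h] at hx; simp at hx; omega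
    have hyn : y ≠ [] := by intro h; rw [h] at hy; simp at hy; omega
    simp only [BLdeck, BRdeck, BLRdeck] at hL hR hLR
    have h01 : k - 0 - 1 ≤ k - 1 := by omega
    have h11 : k - 1 - 1 ≤ k - 1 := by omega
    have h2 : k - 2 ≤ k - 1 := by omega
    have h21 : k - 2 - 1 ≤ k - 1 := by omega
    have eB01 : Bdeck (k - 0 - 1) x = Bdeck (k - 0 - 1) y := by
      rw [B_mono h01 x, B_mono h01 y, hB]
    have eB11 : Bdeck (k - 1 - 1) x = Bdeck (k - 1 - 1) y := by
      rw [B_mono h11 x, B_mono h11 y, hB]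
    have eB2 : Bdeck (k - 2) x = Bdeck (k - 2) y := by
      rw [B_mono h2 x, B_mono h2 y, hB]
    have eB21 : Bdeck (k - 2 - 1) x = Bdeck (k - 2 - 1) y := by
      rw [B_mono h21 x, B_mono h21 y, hB]
    have eL1 : Bdeck (k - 1) x.tail = Bdeck (k - 1) y.tail := hL
    have eL11 : Bdeck (k - 1 - 1) x.tail = Bdeck (k - 1 - 1) y.tail := by
      rw [B_mono h11 x.tail, B_mono h11 y.tail, hL]
    have eR1 : Bdeck (k - 1) x.dropLast = Bdeck (k - 1) y.dropLast := hR
    have eR11 : Bdeck (k - 1 - 1) x.dropLast = Bdeck (k - 1 - 1) y.dropLast := by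
      rw [B_mono h11 x.dropLast, B_mono h11 y.dropLast, hR]
    have eR2 : Bdeck (k - 2) x.dropLast = Bdeck (k - 2) y.dropLast := by
      rw [B_mono h2 x.dropLast, B_mono h2 y.dropLast, hR]
    have eR21 : Bdeck (k - 2 - 1) x.dropLast = Bdeck (k - 2 - 1) y.dropLast := by
      rw [B_mono h21 x.dropLast, B_mono h21 y.dropLast, hR]
    have eLR2 : Bdeck (k - 2) x.tail.dropLast = Bdeck (k - 2) y.tail.dropLast := by
      rw [B_mono h2 x.tail.dropLast, B_mono h2 y.tail.dropLast, hLR]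
    have eLR21 : Bdeck (k - 2 - 1) x.tail.dropLast = Bdeck (k - 2 - 1) y.tail.dropLast := by
      rw [B_mono h21 x.tail.dropLast, B_mono h21 y.tail.dropLast, hLR]
    rw [key k x y hyn, key k y x hxn]
    rw [eB01, eB11, eB2, eB21, eL1, eL11, eR1, eR11, eR2, eR21, eLR2, eLR21, hB]
    abel
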